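/- The two-dimensional SUCPA map maps the line S_x = {(λ, λ+x) : λ ∈ R} onto the line S_{φ(x)}, i.e., the difference of the two components transforms as f_2(β) - f_1(β) = φ(β_2 - β_1), where φ(x) = log(α_1(x)/α_2(x)). -/

import Mathlib

open Real Finset Filter

/-- Auxiliary function `α₁(x) = (1/N₁) Σ_i p_i / (p_i + q_i e^x)`. -/
noncomputable def alpha1 {N : ℕ} (N1 : ℕ) (p q : Fin N → ℝ) (x : ℝ) : ℝ :=
  (1 / (N1 : ℝ)) * ∑ i, p i / (p i + q i * Real.exp x)

/-- Auxiliary function `α₂(x) = (1/N₂) Σ_i q_i / (p_i + q_i e^x)`. -/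
noncomputable def alpha2 {N : ℕ} (N2 : ℕ) (p q : Fin N → ℝ) (x : ℝ) : ℝ :=
  (1 / (N2 : ℝ)) * ∑ i, q i / (p i + q i * Real.exp x)

/-- The two-dimensional SUCPA map. -/
noncomputable def sucpa2 {N : ℕ} (N1 N2 : ℕ) (p q : Fin N → ℝ)
    (β : Fin 2 → ℝ) : Fin 2 → ℝ :=
  ![-Real.log ((1 / (N1 : ℝ)) *
      ∑ i, p i / (p i * Real.exp (β 0) + q i * Real.exp (β 1))),
    -Real.log ((1 / (N2 : ℝ)) *
      ∑ i, q i / (p i * Real.exp (β 0) + q i * Real.exp (β 1)))]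

/-- The intercept-update function `φ(x) = log(α₁(x)/α₂(x))`. -/
noncomputable def phi {N : ℕ} (N1 N2 : ℕ) (p q : Fin N → ℝ) (x : ℝ) : ℝ :=
  Real.log (alpha1 N1 p q x / alpha2 N2 p q x)

/-! Factoring `exp (β 0)` out of every denominator shows that the two sums defining
`sucpa2` are `exp (-β 0) * α₁(β 1 - β 0)` and `exp (-β 0) * α₂(β 1 - β 0)`; the common
factor cancels in the difference of their logarithms. -/

theorem sum_div_mul_exp_add_mul_exp {ι : Type*} [Fintype ι] (r p q : ι → ℝ) (a b : ℝ) :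
    ∑ i, r i / (p i * exp a + q i * exp b) = exp (-a) * ∑ i, r i / (p i + q i * exp (b - a)) := by
  rw [mul_sum]
  refine sum_congr rfl fun i _ => ?_
  have hfactor : p i * exp a + q i * exp b = exp a * (p i + q i * exp (b - a)) := by
    rw [exp_sub]
    field_simp
  rw [hfactor, exp_neg, div_mul_eq_div_div_swap, div_eq_inv_mul _ (exp a)]

section

variable {N : ℕ} (N1 N2 : ℕ) (p q : Fin N → ℝ)

theorem sucpa2_zero (β : Fin 2 → ℝ) :
    sucpa2 N1 N2 p q β 0 = -log (exp (-β 0) * alpha1 N1 p q (β 1 - β 0)) := by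
  rw [sucpa2, Matrix.cons_val_zero, sum_div_mul_exp_add_mul_exp, mul_left_comm, alpha1]

theorem sucpa2_one (β : Fin 2 → ℝ) :
    sucpa2 N1 N2 p q β 1 = -log (exp (-β 0) * alpha2 N2 p q (β 1 - β 0)) := by
  rw [sucpa2, Matrix.cons_val_one, Matrix.cons_val_zero, sum_div_mul_exp_add_mul_exp,
    mul_left_comm, alpha2]

variable [Nonempty (Fin N)] {N1 N2 p q}

theorem alpha1_pos (hN1 : 0 < N1) (hp : ∀ i, 0 < p i) (hq : ∀ i, 0 ≤ q i) (x : ℝ) :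
    0 < alpha1 N1 p q x := by
  unfold alpha1
  have hterm (i : Fin N) : 0 < p i / (p i + q i * exp x) := by
    have := hp i; have := hq i; positivity
  exact mul_pos (by positivity) (sum_pos (fun i _ => hterm i) univ_nonempty)

theorem alpha2_pos (hN2 : 0 < N2) (hp : ∀ i, 0 ≤ p i) (hq : ∀ i, 0 < q i) (x : ℝ) :
    0 < alpha2 N2 p q x := by
  unfold alpha2
  have hterm (i : Fin N) : 0 < q i / (p i + q i * exp x) := by
    have := hp i; have := hq i; positivity
  exact mul_pos (by positivity) (sum_pos (fun i _ => hterm i) univ_nonempty)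

end

theorem sucpa2_maps_lines_general {N : ℕ} (N1 N2 : ℕ) (hN1 : 0 < N1) (hN2 : 0 < N2)
    (hN : N1 + N2 = N) (p q : Fin N → ℝ) (hp : ∀ i, 0 < p i) (hq : ∀ i, 0 < q i)
    (β : Fin 2 → ℝ) :
    sucpa2 N1 N2 p q β 1 - sucpa2 N1 N2 p q β 0 = phi N1 N2 p q (β 1 - β 0) := by
  have : Nonempty (Fin N) := ⟨⟨0, by omega⟩⟩
  have hα1 := alpha1_pos hN1 hp (fun i => (hq i).le) (β 1 - β 0)
  have hα2 := alpha2_pos hN2 (fun i => (hp i).le) hq (β 1 - β 0)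
  rw [sucpa2_zero, sucpa2_one, phi, log_mul (exp_pos _).ne' hα1.ne',
    log_mul (exp_pos _).ne' hα2.ne', log_div hα1.ne' hα2.ne']
  ring

theorem sucpa2_maps_lines {N : ℕ} (N1 N2 : ℕ) (hN1 : 0 < N1) (hN2 : 0 < N2)
    (hN : N1 + N2 = N) (p q : Fin N → ℝ) (hp : ∀ i, 0 < p i) (hq : ∀ i, 0 < q i)
    (hpq : ∀ i, p i + q i = 1) (β : Fin 2 → ℝ) :
    sucpa2 N1 N2 p q β 1 - sucpa2 N1 N2 p q β 0 = phi N1 N2 p q (β 1 - β 0) :=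
  sucpa2_maps_lines_general N1 N2 hN1 hN2 hN p q hp hq β
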